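/- arXiv:2501.02466 — 3 statements merged into one kernel-verified Lean document; each statement's English description precedes it below -/
import Mathlib

section
/- A two-sided ideal I of a ring A is idempotent (I = I²) if and only if there exists a projective left A-module P with I = tr(P). -/
/-!
The trace ideal of a projective module `P` is idempotent: with a dual basis `p = ∑ φᵢ(p) xᵢ`,
every `f p = ∑ φᵢ(p) f(xᵢ)` is a sum of products of elements of `tr(P)`.

Conversely, let `I = I²` and let `J` be the Jacobson radical. In the semisimple ring `A/J` the
image of `I` is generated by an idempotent, which lifts to an idempotent `e` of `A` because `J`
is nilpotent; then `I + J = AeA + J`, where `AeA` is written `Ideal.span {e} * ⊤` below. Both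
`I` and `AeA` are idempotent, so `I = Iⁿ ⊆ (AeA + J)ⁿ ⊆ AeA + Jⁿ = AeA`, and symmetrically.
Finally `Ae` is projective with `tr(Ae) = AeA`.
-/

/-- The trace ideal of a module `P`: the sum of the images of all `A`-linear maps `P → A`. -/
def traceIdeal (A : Type) [Ring A] (P : Type) [AddCommGroup P] [Module A P] : Ideal A :=
  ⨆ f : P →ₗ[A] A, LinearMap.range f

variable {A : Type} [Ring A]

theorem TwoSidedIdeal.asIdeal_mul_asIdeal (I : TwoSidedIdeal A) :
    I.asIdeal * I.asIdeal = Submodule.span A {x : A | ∃ a ∈ I, ∃ b ∈ I, x = a * b} :=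
  le_antisymm (Ideal.mul_le.2 fun a ha b hb => Submodule.subset_span ⟨a, ha, b, hb, rfl⟩)
    (Submodule.span_le.2 fun _ ⟨_, ha, _, hb, hx⟩ => hx ▸ Ideal.mul_mem_mul ha hb)

section traceIdeal

variable {P : Type} [AddCommGroup P] [Module A P]

theorem apply_mem_traceIdeal (f : P →ₗ[A] A) (p : P) : f p ∈ traceIdeal A P :=
  le_iSup (fun f : P →ₗ[A] A => LinearMap.range f) f ⟨p, rfl⟩

theorem traceIdeal_mul_self [Module.Projective A P] :
    traceIdeal A P * traceIdeal A P = traceIdeal A P := by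
  refine le_antisymm Ideal.mul_le_right (iSup_le fun f => ?_)
  rintro _ ⟨p, rfl⟩
  obtain ⟨s, hs⟩ := Module.projective_def'.mp ‹Module.Projective A P›
  have hp : p = (s p).sum fun x a => a • x := by
    simpa [Finsupp.linearCombination_apply] using (LinearMap.congr_fun hs p).symm
  rw [hp, map_finsuppSum]
  refine Submodule.finsuppSum_mem _ _ _ _ fun x _ => ?_
  rw [map_smul, smul_eq_mul]
  exact Ideal.mul_mem_mul (apply_mem_traceIdeal ((Finsupp.lapply x).comp s) p)
    (apply_mem_traceIdeal f x)

end traceIdeal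

namespace IsIdempotentElem

variable {e : A} (he : IsIdempotentElem e)
include he

theorem projective_span_singleton : Module.Projective A (Ideal.span {e}) := by
  refine .of_split (Ideal.span {e}).subtype
    ((LinearMap.toSpanSingleton A A e).codRestrict _ fun a => Ideal.mul_mem_left _ a
      (Ideal.mem_span_singleton_self e)) (LinearMap.ext fun ⟨x, hx⟩ => Subtype.ext ?_)
  obtain ⟨a, rfl⟩ := Ideal.mem_span_singleton'.1 hx
  change a * e * e = a * e
  rw [mul_assoc, he.eq]

theorem traceIdeal_span_singleton :
    traceIdeal A (Ideal.span {e}) = Ideal.span {e} * ⊤ := by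
  refine le_antisymm (iSup_le fun f => ?_) (Ideal.mul_le.2 fun r hr s _ => ?_)
  · rintro _ ⟨⟨x, hx⟩, rfl⟩
    obtain ⟨a, rfl⟩ := Ideal.mem_span_singleton'.1 hx
    have : (⟨a * e, hx⟩ : Ideal.span {e}) = (a * e) • ⟨e, Ideal.mem_span_singleton_self e⟩ :=
      Subtype.ext (by simp [mul_assoc, he.eq])
    rw [this, map_smul, smul_eq_mul]
    exact Ideal.mul_mem_mul (Ideal.mul_mem_left _ a (Ideal.mem_span_singleton_self e)) trivial
  · exact apply_mem_traceIdeal ((LinearMap.toSpanSingleton A A s).comp (Ideal.span {e}).subtype)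
      ⟨r, hr⟩

theorem span_singleton_mul_top_mul_self :
    Ideal.span {e} * ⊤ * (Ideal.span {e} * ⊤) = Ideal.span {e} * ⊤ := by
  have := he.projective_span_singleton
  rw [← he.traceIdeal_span_singleton, traceIdeal_mul_self]

end IsIdempotentElem

namespace Ideal

theorem sup_pow_le_sup_pow (K J : Ideal A) [K.IsTwoSided] (n : ℕ) :
    (K ⊔ J) ^ n ≤ K ⊔ J ^ n := by
  induction n with
  | zero => simp only [Submodule.pow_zero, one_eq_top, le_sup_right]
  | succ n ih =>
    calc (K ⊔ J) ^ (n + 1) = (K ⊔ J) ^ n * (K ⊔ J) := Submodule.pow_succ _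
      _ ≤ (K ⊔ J ^ n) * (K ⊔ J) := mul_mono_left ih
      _ = K * (K ⊔ J) ⊔ (J ^ n * K ⊔ J ^ (n + 1)) := by
        rw [sup_mul, mul_sup (J ^ n), Submodule.pow_succ _]
      _ ≤ K ⊔ J ^ (n + 1) :=
        sup_le (mul_le_left.trans le_sup_left) (sup_le_sup_right mul_le_right _)

theorem pow_succ_eq_self_of_mul_self {I : Ideal A} (hI : I * I = I) (n : ℕ) :
    I ^ (n + 1) = I := by
  induction n with
  | zero => exact Submodule.pow_one _
  | succ n ih => rw [Submodule.pow_succ _, ih, hI]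

theorem le_of_le_sup_of_isNilpotent {I K J : Ideal A} [K.IsTwoSided] (hI : I * I = I)
    (hJ : IsNilpotent J) (h : I ≤ K ⊔ J) : I ≤ K := by
  obtain ⟨n, hn⟩ := hJ
  calc I = I ^ (n + 1) := (pow_succ_eq_self_of_mul_self hI n).symm
    _ ≤ (K ⊔ J) ^ (n + 1) := pow_right_mono h _
    _ ≤ K ⊔ J ^ (n + 1) := sup_pow_le_sup_pow K J _
    _ = K := by rw [Submodule.pow_succ _, hn, zero_mul, zero_eq_bot, sup_bot_eq]

variable [IsSemiprimaryRing A]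

theorem exists_isIdempotentElem_sup_jacobson_eq (I : Ideal A) [I.IsTwoSided] :
    ∃ e : A, IsIdempotentElem e ∧
      I ⊔ Ring.jacobson A = Ideal.span {e} * ⊤ ⊔ Ring.jacobson A := by
  set π := Ideal.Quotient.mk (Ring.jacobson A)
  obtain ⟨ε, hε, hIε⟩ := IsSemisimpleRing.ideal_eq_span_idempotent (I.map π)
  have hnil : ∀ x ∈ RingHom.ker π, IsNilpotent x := by
    obtain ⟨n, hn⟩ := IsSemiprimaryRing.isNilpotent (R := A)
    intro x hx
    rw [Ideal.mk_ker] at hx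
    exact ⟨n, by simpa [hn] using Ideal.pow_mem_pow hx n⟩
  obtain ⟨e, he, rfl⟩ := exists_isIdempotentElem_eq_of_ker_isNilpotent π hnil ε
    (Ideal.Quotient.mk_surjective ε) hε
  have hsup : ∀ K : Ideal A, K ⊔ Ring.jacobson A = (K.map π).comap π := fun K => by
    rw [Ideal.comap_map_of_surjective _ Ideal.Quotient.mk_surjective, ← RingHom.ker_eq_comap_bot,
      Ideal.mk_ker]
  have hspan : (Ideal.span {e}).map π = I.map π := by
    rw [Ideal.map_span, Set.image_singleton, hIε]
  have hle : Ideal.span {e} ≤ Ideal.span {e} * ⊤ := fun r hr =>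
    mul_one r ▸ Ideal.mul_mem_mul hr Submodule.mem_top
  refine ⟨e, he, le_antisymm ?_ (sup_le ?_ le_sup_right)⟩
  · rw [hsup, hsup, ← hspan]
    exact Ideal.comap_mono (Ideal.map_mono hle)
  · refine Ideal.mul_le.2 fun r hr s _ => ?_
    rw [hsup]
    refine Ideal.mul_mem_right s _ ?_
    rw [← hspan, ← hsup]
    exact Ideal.mem_sup_left hr

theorem exists_isIdempotentElem_eq_span_mul_top (I : Ideal A) [I.IsTwoSided] (hI : I * I = I) :
    ∃ e : A, IsIdempotentElem e ∧ I = Ideal.span {e} * ⊤ := by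
  obtain ⟨e, he, hIe⟩ := exists_isIdempotentElem_sup_jacobson_eq I
  have hJ := IsSemiprimaryRing.isNilpotent (R := A)
  exact ⟨e, he, le_antisymm (le_of_le_sup_of_isNilpotent hI hJ (hIe ▸ le_sup_left))
    (le_of_le_sup_of_isNilpotent he.span_singleton_mul_top_mul_self hJ (hIe ▸ le_sup_left))⟩

end Ideal

/-- A two-sided ideal `I` of a ring `A` (here an artin algebra, i.e. an
Artinian ring which is a finite algebra over a commutative Artinian ring) is idempotent,
`I = I²`, if and only if there is a projective left `A`-module `P` with `I = tr(P)`. -/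
theorem idempotent_iff_trace_of_projective
    (R A : Type) [CommRing R] [IsArtinianRing R] [Ring A] [Algebra R A] [Module.Finite R A]
    (I : TwoSidedIdeal A) :
    I.asIdeal = Submodule.span A {x : A | ∃ a ∈ I, ∃ b ∈ I, x = a * b} ↔
      ∃ (P : Type) (_ : AddCommGroup P) (_ : Module A P),
        Module.Projective A P ∧ I.asIdeal = traceIdeal A P := by
  rw [← I.asIdeal_mul_asIdeal]
  constructor
  · intro hI
    have : IsArtinianRing A := .of_finite R A
    obtain ⟨e, he, hIe⟩ := I.asIdeal.exists_isIdempotentElem_eq_span_mul_top hI.symm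
    exact ⟨Ideal.span {e}, _, _, he.projective_span_singleton,
      hIe.trans he.traceIdeal_span_singleton.symm⟩
  · rintro ⟨P, _, _, _, hIP⟩
    rw [hIP, traceIdeal_mul_self]
end

section
/- For any two-sided ideal I of an artin algebra A, Ext¹_A(A/I, D(A/I)) ≅ D(I/I²), where D is the Matlis duality. In particular, Ext¹_A(A/I, D(A/I)) = 0 if and only if I is idempotent. -/
section Dual

open CategoryTheory

variable (k A : Type) [Field k] [Ring A] [Algebra k A]

/-- Left `A`-module structure on the `k`-dual of `A`, via the right regular action. -/
noncomputable instance dualModule : Module A (A →ₗ[k] k) where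
  smul a f := f.comp (LinearMap.mulRight k a)
  one_smul f := by ext x; show f (x * 1) = f x; rw [mul_one]
  mul_smul a b f := by ext x; show f (x * (a * b)) = f ((x * a) * b); rw [mul_assoc]
  smul_zero a := rfl
  smul_add a f g := rfl
  add_smul a b f := by ext x; show f (x * (a + b)) = f (x * a) + f (x * b); rw [mul_add, map_add]
  zero_smul f := by ext x; show f (x * 0) = 0; rw [mul_zero, map_zero]

/-- The Matlis dual `D(A/I)`, realized as the `A`-submodule of `D(A) = Hom_k(A, k)`
consisting of the functionals vanishing on `I`. -/
noncomputable def DBar (I : TwoSidedIdeal A) : Submodule A (A →ₗ[k] k) where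
  carrier := {f | ∀ x ∈ I, f x = 0}
  add_mem' := fun hf hg x hx => by simp [hf x hx, hg x hx]
  zero_mem' := fun x hx => rfl
  smul_mem' := fun a f hf x hx => hf (x * a) (I.mul_mem_right x a hx)

end Dual

/-- The `n`-th Ext-group `Ext_A^n(M, N)` of left `A`-modules. -/
noncomputable def egrp (A : Type) [Ring A] (n : ℕ) (M N : Type) [AddCommGroup M] [Module A M]
    [AddCommGroup N] [Module A N] : Type :=
  ((_root_.Ext ℤ (ModuleCat A) n).obj (Opposite.op (ModuleCat.of A M))).obj
    (ModuleCat.of A N)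

noncomputable instance (A : Type) [Ring A] (n : ℕ) (M N : Type) [AddCommGroup M] [Module A M]
    [AddCommGroup N] [Module A N] : AddCommGroup (egrp A n M N) :=
  inferInstanceAs (AddCommGroup (((_root_.Ext ℤ (ModuleCat A) n).obj
    (Opposite.op (ModuleCat.of A M))).obj (ModuleCat.of A N)))

/-- `I²` regarded as a submodule of `I`. -/
noncomputable def sqInside (A : Type) [Ring A] (I : TwoSidedIdeal A) :
    Submodule A ↥(I.asIdeal) :=
  (Submodule.span A {x : A | ∃ a ∈ I, ∃ b ∈ I, x = a * b}).comap (I.asIdeal).subtype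

/-!
Since `A` is projective, `0 → I → A → A/I → 0` identifies `Ext¹_A(A/I, N)` with the cokernel of
the restriction map `Hom_A(A, N) → Hom_A(I, N)`; when `I` annihilates `N` this map is zero, so
`Ext¹_A(A/I, N) ≅ Hom_A(I, N)`. For `N = D(A/I)` every such map kills `I²`, and maps from
`I/I²` (which `I` annihilates) into `D(A)` automatically land in `D(A/I)`. Finally
`Hom_A(M, D(A)) ≅ D(M)` by the coinduction adjunction `φ ↦ (m ↦ φ(m)(1))`.
-/

open CategoryTheory

universe u

section SyzygyResolution

variable {R : Type u} [Ring R] {P : Type u} [AddCommGroup P] [Module R P] (K : Submodule R P)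

/-- Stage `n + 1` is the free module on the submodule `Kₙ` of stage `n`, together with the kernel
of the evaluation map onto `Kₙ`; the maps `Pₙ₊₁ → Kₙ ⊆ Pₙ` form a resolution of `P ⧸ K`. -/
noncomputable def syzygyStage : ℕ → Σ M : ModuleCat.{u} R, Submodule R M
  | 0 => ⟨ModuleCat.of R P, K⟩
  | n + 1 => ⟨ModuleCat.of R ((syzygyStage n).2 →₀ R),
      LinearMap.ker (Finsupp.linearCombination R (id : (syzygyStage n).2 → (syzygyStage n).2))⟩

noncomputable def syzygyMap (n : ℕ) : ((syzygyStage K n).2 →₀ R) →ₗ[R] (syzygyStage K n).1 :=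
  (syzygyStage K n).2.subtype ∘ₗ Finsupp.linearCombination R id

lemma ker_syzygyMap (n : ℕ) : LinearMap.ker (syzygyMap K n) = (syzygyStage K (n + 1)).2 :=
  LinearMap.ker_comp_of_ker_eq_bot _ (Submodule.ker_subtype _)

lemma range_syzygyMap (n : ℕ) : LinearMap.range (syzygyMap K n) = (syzygyStage K n).2 := by
  rw [syzygyMap, LinearMap.range_comp,
    LinearMap.range_eq_top.2 (Finsupp.linearCombination_id_surjective R _),
    Submodule.map_subtype_top]

noncomputable def syzygyComplex : ChainComplex (ModuleCat.{u} R) ℕ :=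
  ChainComplex.of (fun n => (syzygyStage K n).1) (fun n => ModuleCat.ofHom (syzygyMap K n))
    fun n => ModuleCat.hom_ext <| LinearMap.range_le_ker_iff.1 <|
      (range_syzygyMap K (n + 1)).trans_le (ker_syzygyMap K n).ge

lemma syzygyComplex_d (n : ℕ) :
    (syzygyComplex K).d (n + 1) n = ModuleCat.ofHom (syzygyMap K n) :=
  ChainComplex.of_d (fun n => (syzygyStage K n).1) (fun n => ModuleCat.ofHom (syzygyMap K n)) n

lemma syzygyComplex_exactAt (n : ℕ) : (syzygyComplex K).ExactAt (n + 1) := by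
  rw [HomologicalComplex.exactAt_iff' _ (n + 2) (n + 1) n (by simp) (by simp),
    ShortComplex.moduleCat_exact_iff_range_eq_ker]
  change LinearMap.range ((syzygyComplex K).d (n + 2) (n + 1)).hom =
    LinearMap.ker ((syzygyComplex K).d (n + 1) n).hom
  rw [syzygyComplex_d, syzygyComplex_d]
  exact (range_syzygyMap K (n + 1)).trans (ker_syzygyMap K n).symm

lemma syzygyComplex_d_comp_mkQ :
    (syzygyComplex K).d 1 0 ≫ ModuleCat.ofHom K.mkQ = 0 := by
  rw [syzygyComplex_d]
  exact ModuleCat.hom_ext <| LinearMap.range_le_ker_iff.1 <|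
    (range_syzygyMap K 0).trans_le (Submodule.ker_mkQ K).ge

noncomputable def syzygyResolution [Module.Projective R P] :
    ProjectiveResolution (ModuleCat.of R (P ⧸ K)) where
  complex := syzygyComplex K
  projective
    | 0 => (IsProjective.iff_projective _).mp (inferInstanceAs (Module.Projective R P))
    | n + 1 => (IsProjective.iff_projective _).mp
        (inferInstanceAs (Module.Projective R ((syzygyStage K n).2 →₀ R)))
  π := (ChainComplex.toSingle₀Equiv _ _).symm ⟨ModuleCat.ofHom K.mkQ, syzygyComplex_d_comp_mkQ K⟩
  quasiIso := ⟨fun n => by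
    cases n with
    | zero =>
      rw [ChainComplex.quasiIsoAt₀_iff, ShortComplex.quasiIso_iff_of_zeros']
      · refine (ShortComplex.exact_and_epi_g_iff_of_iso
          (S₂ := ShortComplex.mk _ _ (syzygyComplex_d_comp_mkQ K))
          (ShortComplex.isoMk (Iso.refl _) (Iso.refl _) (Iso.refl _)
            (by simp) ((Category.id_comp _).trans (Category.comp_id _).symm))).2 ⟨?_, ?_⟩
        · rw [ShortComplex.moduleCat_exact_iff_range_eq_ker]
          change LinearMap.range ((syzygyComplex K).d 1 0).hom = LinearMap.ker K.mkQ
          rw [syzygyComplex_d, Submodule.ker_mkQ]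
          exact range_syzygyMap K 0
        · exact (ModuleCat.epi_iff_surjective _).2 K.mkQ_surjective
      all_goals rfl
    | succ n =>
      rw [quasiIsoAt_iff_exactAt' _ _ (ChainComplex.exactAt_succ_single_obj _ _)]
      exact syzygyComplex_exactAt K n⟩

end SyzygyResolution

section ExtOne

variable {R : Type u} [Ring R] {P : Type u} [AddCommGroup P] [Module R P] (K : Submodule R P)
  (Y : ModuleCat.{u} R)

/-- `Hom(P₀, Y) → Hom(P₁, Y) → Hom(P₂, Y)`, whose homology is `Ext¹(P ⧸ K, Y)`. -/
noncomputable abbrev syzygyHomShortComplex : ShortComplex (ModuleCat ℤ) :=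
  ((syzygyComplex K).linearYonedaObj ℤ Y).sc' 0 1 2

lemma syzygyHomShortComplex_f_eq_zero (hY : ∀ φ : P →ₗ[R] Y, K ≤ LinearMap.ker φ) :
    (syzygyHomShortComplex K Y).f = 0 :=
  ModuleCat.hom_ext <| LinearMap.ext fun φ => by
    change (syzygyComplex K).d 1 0 ≫ φ = 0
    rw [syzygyComplex_d]
    exact ModuleCat.hom_ext <| LinearMap.range_le_ker_iff.1 <|
      (range_syzygyMap K 0).trans_le (hY φ.hom)

noncomputable def syzygyPresentation : ShortComplex (ModuleCat.{u} R) :=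
  ShortComplex.mk ((syzygyComplex K).d 2 1) (ModuleCat.ofHom (Finsupp.linearCombination R id :
    (K →₀ R) →ₗ[R] K)) (by
      rw [syzygyComplex_d]
      exact ModuleCat.hom_ext <| LinearMap.range_le_ker_iff.1 (range_syzygyMap K 1).le)

lemma syzygyPresentation_exact : (syzygyPresentation K).Exact := by
  rw [ShortComplex.moduleCat_exact_iff_range_eq_ker]
  change LinearMap.range ((syzygyComplex K).d 2 1).hom = _
  rw [syzygyComplex_d]
  exact range_syzygyMap K 1

instance : Epi (syzygyPresentation K).g :=
  (ModuleCat.epi_iff_surjective _).2 (Finsupp.linearCombination_id_surjective R K)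

noncomputable def homToCocycles :
    (K →ₗ[R] Y) →+ LinearMap.ker (syzygyHomShortComplex K Y).g.hom where
  toFun f := ⟨(syzygyPresentation K).g ≫ ModuleCat.ofHom f,
    (syzygyPresentation K).zero_assoc _ |>.trans (Limits.zero_comp)⟩
  map_zero' := Subtype.ext (Limits.comp_zero)
  map_add' _ _ := Subtype.ext (Preadditive.comp_add _ _ _ _ _ _)

lemma homToCocycles_bijective : Function.Bijective (homToCocycles K Y) := by
  refine ⟨fun _ _ h => ?_, fun φ => ?_⟩
  · exact ModuleCat.hom_ext_iff.1 ((cancel_epi (syzygyPresentation K).g).1 (congrArg Subtype.val h))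
  · obtain ⟨l, hl⟩ := (syzygyPresentation_exact K).desc' φ.1 φ.2
    exact ⟨l.hom, Subtype.ext hl⟩

noncomputable def extOneQuotientAddEquiv [Module.Projective R P]
    (hY : ∀ φ : P →ₗ[R] Y, K ≤ LinearMap.ker φ) :
    ((Ext ℤ (ModuleCat.{u} R) 1).obj (Opposite.op (ModuleCat.of R (P ⧸ K)))).obj Y ≃+
      (K →ₗ[R] Y) :=
  ((syzygyResolution K).isoExt 1 Y ≪≫
    HomologicalComplex.homologyIsoSc' _ 0 1 2 (by simp) (by simp) ≪≫
    (ShortComplex.asIsoHomologyπ _ (syzygyHomShortComplex_f_eq_zero K Y hY)).symm ≪≫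
    ShortComplex.moduleCatCyclesIso _).toLinearEquiv.toAddEquiv.trans
  (AddEquiv.ofBijective _ (homToCocycles_bijective K Y)).symm

end ExtOne

section ExtOneIdeal

variable {R : Type u} [Ring R] (I : Ideal R) (Y : Type u) [AddCommGroup Y] [Module R Y]

noncomputable def extOneQuotientIdealAddEquiv (hY : Module.IsTorsionBySet R Y I) :
    ((Ext ℤ (ModuleCat.{u} R) 1).obj (Opposite.op (ModuleCat.of R (R ⧸ I)))).obj
      (ModuleCat.of R Y) ≃+ (I →ₗ[R] Y) :=
  extOneQuotientAddEquiv I (ModuleCat.of R Y) fun φ i hi => by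
    rw [LinearMap.mem_ker, ← mul_one i, ← smul_eq_mul, map_smul]
    exact @hY (φ 1) ⟨i, hi⟩

end ExtOneIdeal

section Coinduction

variable {k A : Type} [Field k] [Ring A] [Algebra k A]
  {M : Type*} [AddCommGroup M] [Module A M] [Module k M] [IsScalarTower k A M]

noncomputable def homDualAddEquiv : (M →ₗ[A] (A →ₗ[k] k)) ≃+ (M →ₗ[k] k) where
  toFun Φ :=
    { toFun m := Φ m 1
      map_add' m m' := by rw [map_add]; rfl
      map_smul' c m := by
        rw [← algebraMap_smul A c m, map_smul]
        change Φ m (1 * algebraMap k A c) = c • Φ m 1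
        rw [one_mul, Algebra.algebraMap_eq_smul_one, map_smul] }
  invFun ψ :=
    { toFun m := ψ ∘ₗ (LinearMap.id : A →ₗ[k] A).smulRight m
      map_add' m m' := by ext x; simp
      map_smul' a m := by ext x; change ψ (x • a • m) = ψ ((x * a) • m); rw [mul_smul] }
  left_inv Φ := by
    ext m x
    change Φ (x • m) 1 = Φ m x
    rw [map_smul]
    change Φ m (1 * x) = _
    rw [one_mul]
  right_inv ψ := by ext m; simp
  map_add' _ _ := rfl

end Coinduction

section QuotientHom

variable {R M N : Type*} [Ring R] [AddCommGroup M] [Module R M] [AddCommGroup N] [Module R N]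

noncomputable def Submodule.liftQAddEquiv (p : Submodule R M)
    (h : ∀ f : M →ₗ[R] N, p ≤ LinearMap.ker f) : (M →ₗ[R] N) ≃+ (M ⧸ p →ₗ[R] N) where
  toFun f := p.liftQ f (h f)
  invFun g := g ∘ₗ p.mkQ
  left_inv f := p.liftQ_mkQ f (h f)
  right_inv _ := p.linearMap_qext (p.liftQ_mkQ _ _)
  map_add' _ _ := p.linearMap_qext rfl

noncomputable def Submodule.codRestrictAddEquiv (p : Submodule R N)
    (h : ∀ f : M →ₗ[R] N, ∀ m, f m ∈ p) : (M →ₗ[R] p) ≃+ (M →ₗ[R] N) where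
  toFun f := p.subtype ∘ₗ f
  invFun f := f.codRestrict p (h f)
  left_inv _ := rfl
  right_inv _ := rfl
  map_add' _ _ := rfl

end QuotientHom

section DualQuotient

variable {k A : Type} [Field k] [Ring A] [Algebra k A] (I : TwoSidedIdeal A)

lemma isTorsionBySet_DBar : Module.IsTorsionBySet A (DBar k A I) I.asIdeal :=
  fun f i => Subtype.ext <| LinearMap.ext fun x =>
    f.2 (x * i) (I.mul_mem_left x i (TwoSidedIdeal.mem_asIdeal.1 i.2))

lemma apply_mem_DBar {M : Type*} [AddCommGroup M] [Module A M]
    (hM : Module.IsTorsionBySet A M I.asIdeal) (Φ : M →ₗ[A] (A →ₗ[k] k)) (m : M) :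
    Φ m ∈ DBar k A I := fun x hx => by
  rw [← one_mul x]
  change (x • Φ m) 1 = 0
  rw [← map_smul, @hM m ⟨x, TwoSidedIdeal.mem_asIdeal.2 hx⟩, map_zero]
  rfl

lemma isTorsionBySet_quotient_sqInside :
    Module.IsTorsionBySet A (I.asIdeal ⧸ sqInside A I) I.asIdeal :=
  (Module.isTorsionBySet_quotient_iff _ _).2 fun x a ha => Submodule.subset_span
    ⟨a, TwoSidedIdeal.mem_asIdeal.1 ha, x, TwoSidedIdeal.mem_asIdeal.1 x.2, rfl⟩

lemma sqInside_le_ker {N : Type*} [AddCommGroup N] [Module A N]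
    (hN : Module.IsTorsionBySet A N I.asIdeal) (f : I.asIdeal →ₗ[A] N) :
    sqInside A I ≤ LinearMap.ker f := by
  have hspan : Submodule.span A {x : A | ∃ a ∈ I, ∃ b ∈ I, x = a * b} ≤
      (LinearMap.ker f).map I.asIdeal.subtype := Submodule.span_le.2 <| by
    rintro _ ⟨a, ha, b, hb, rfl⟩
    refine ⟨a • ⟨b, TwoSidedIdeal.mem_asIdeal.2 hb⟩, ?_, rfl⟩
    rw [SetLike.mem_coe, LinearMap.mem_ker, map_smul]
    exact @hN _ ⟨a, TwoSidedIdeal.mem_asIdeal.2 ha⟩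
  exact (Submodule.comap_mono hspan).trans
    (Submodule.comap_map_eq_of_injective Subtype.val_injective _).le

lemma sqInside_eq_top_iff :
    sqInside A I = ⊤ ↔ Submodule.span A {x : A | ∃ a ∈ I, ∃ b ∈ I, x = a * b} = I.asIdeal := by
  have hle : Submodule.span A {x : A | ∃ a ∈ I, ∃ b ∈ I, x = a * b} ≤ I.asIdeal :=
    Submodule.span_le.2 fun _ ⟨a, _, b, hb, hx⟩ =>
      hx ▸ TwoSidedIdeal.mem_asIdeal.2 (I.mul_mem_left a b hb)
  rw [sqInside, Submodule.comap_subtype_eq_top]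
  exact ⟨hle.antisymm, fun h => h.ge⟩

noncomputable def homDBarAddEquivDualQuotient :
    (I.asIdeal →ₗ[A] DBar k A I) ≃+ ((I.asIdeal ⧸ sqInside A I) →ₗ[k] k) :=
  ((sqInside A I).liftQAddEquiv (N := DBar k A I)
      (sqInside_le_ker I (isTorsionBySet_DBar I))).trans <|
    ((DBar k A I).codRestrictAddEquiv
      (apply_mem_DBar I (isTorsionBySet_quotient_sqInside I))).trans homDualAddEquiv

end DualQuotient

theorem ext_one_quotient_dual_iso_dual_sq_general
    (k A : Type) [Field k] [Ring A] [Algebra k A]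
    (I : TwoSidedIdeal A) :
    Nonempty ((egrp A 1 (A ⧸ I.asIdeal) ↥(DBar k A I)) ≃+
        ((↥(I.asIdeal) ⧸ sqInside A I) →ₗ[k] k)) ∧
      (Subsingleton (egrp A 1 (A ⧸ I.asIdeal) ↥(DBar k A I)) ↔
        Submodule.span A {x : A | ∃ a ∈ I, ∃ b ∈ I, x = a * b} = I.asIdeal) := by
  let e : egrp A 1 (A ⧸ I.asIdeal) (DBar k A I) ≃+ ((I.asIdeal ⧸ sqInside A I) →ₗ[k] k) :=
    (extOneQuotientIdealAddEquiv I.asIdeal (DBar k A I) (isTorsionBySet_DBar I)).trans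
      (homDBarAddEquivDualQuotient I)
  refine ⟨⟨e⟩, ?_⟩
  rw [e.toEquiv.subsingleton_congr, Module.subsingleton_dual_iff,
    Submodule.Quotient.subsingleton_iff, sqInside_eq_top_iff]

/-- For a two-sided ideal `I` of an artin algebra `A` over a field `k`,
`Ext¹_A(A/I, D(A/I)) ≅ D(I/I²)`, where `D = Hom_k(-, k)` is the Matlis duality.
In particular, `Ext¹_A(A/I, D(A/I)) = 0` if and only if `I` is idempotent. -/
theorem ext_one_quotient_dual_iso_dual_sq
    (k A : Type) [Field k] [Ring A] [Algebra k A] [Module.Finite k A]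
    (I : TwoSidedIdeal A) :
    Nonempty ((egrp A 1 (A ⧸ I.asIdeal) ↥(DBar k A I)) ≃+
        ((↥(I.asIdeal) ⧸ sqInside A I) →ₗ[k] k)) ∧
      (Subsingleton (egrp A 1 (A ⧸ I.asIdeal) ↥(DBar k A I)) ↔
        Submodule.span A {x : A | ∃ a ∈ I, ∃ b ∈ I, x = a * b} = I.asIdeal) :=
  ext_one_quotient_dual_iso_dual_sq_general k A I
end

section
/- Let T be a partial 1-tilting module over an artin algebra A (i.e., pd_A(T) ≤ 1 and Ext¹_A(T,T) = 0). Then the full subcategory fac(T) of factor modules of finite direct sums of copies of T is closed under extensions in A-mod, and T is a projective object in the exact category fac(T). -/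
section Fac

variable (A : Type) [Ring A]

/-- `fac(T)`: the class of factor modules of finite direct sums of copies of `T`. -/
def facP (T : Type) [AddCommGroup T] [Module A T]
    (M : Type) [AddCommGroup M] [Module A M] : Prop :=
  ∃ (n : ℕ) (f : (Fin n → T) →ₗ[A] M), Function.Surjective f

/-- `M` is a direct summand of `N`. -/
def isSummand (M N : Type) [AddCommGroup M] [Module A M] [AddCommGroup N] [Module A N] :
    Prop :=
  ∃ (s : M →ₗ[A] N) (r : N →ₗ[A] M), r.comp s = LinearMap.id

/-- `add(T)`: direct summands of finite direct sums of copies of `T`. -/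
def addP (T : Type) [AddCommGroup T] [Module A T]
    (M : Type) [AddCommGroup M] [Module A M] : Prop :=
  ∃ n : ℕ, isSummand A M (Fin n → T)

/-- The module `T` has projective dimension at most one. -/
def pdLeOne (T : Type) [AddCommGroup T] [Module A T] : Prop :=
  ∃ (P₀ P₁ : ModuleCat.{0} A) (_ : Module.Projective A ↥P₀) (_ : Module.Projective A ↥P₁)
    (i : ↥P₁ →ₗ[A] ↥P₀) (p : ↥P₀ →ₗ[A] T),
      Function.Injective i ∧ Function.Surjective p ∧ Function.Exact i p

/-- `M` is a projective object of the exact category `fac(T)`. -/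
def projInFac (T : Type) [AddCommGroup T] [Module A T]
    (M : Type) [AddCommGroup M] [Module A M] : Prop :=
  facP A T M ∧ ∀ (X Y Z : Type) [AddCommGroup X] [Module A X] [AddCommGroup Y] [Module A Y]
    [AddCommGroup Z] [Module A Z] (i : X →ₗ[A] Y) (p : Y →ₗ[A] Z),
      Function.Injective i → Function.Surjective p → Function.Exact i p →
      facP A T X → facP A T Y → facP A T Z →
      ∀ g : M →ₗ[A] Z, ∃ h : M →ₗ[A] Y, p.comp h = g

/-!
Take a projective resolution `0 → P₁ → P₀ → T → 0`. Then `Ext¹(T, X) = 0` says exactly that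
every map `P₁ → X` extends to `P₀`. This property passes from `T` to finite direct sums and, `P₁`
being projective, to their quotients: it holds on all of `fac(T)`. For an exact sequence
`0 → X → Y → Z → 0` with `X ∈ fac(T)`, any `T → Z` then lifts to `Y`: lift its composite with
`P₀ → T`, and correct it on `P₁` by a map through `X`. This is the projectivity of `T`; lifting a
surjection `Tᵐ → Z` in the same way exhibits `Y` as a quotient of `X × Tᵐ`, which lies in `fac(T)`.
-/

open CategoryTheory Limits ZeroObject

section HasExtensionsAlong

variable {C : Type*} [Category C]

def HasExtensionsAlong {P Q : C} (i : P ⟶ Q) (X : C) : Prop :=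
  ∀ u : P ⟶ X, ∃ v : Q ⟶ X, i ≫ v = u

lemma HasExtensionsAlong.of_epi {P Q X X' : C} [Projective P] {i : P ⟶ Q}
    (h : HasExtensionsAlong i X) (q : X ⟶ X') [Epi q] : HasExtensionsAlong i X' := by
  intro u
  obtain ⟨v, hv⟩ := h (Projective.factorThru u q)
  exact ⟨v ≫ q, by rw [← Category.assoc, hv, Projective.factorThru_comp]⟩

end HasExtensionsAlong

namespace CategoryTheory.ShortComplex

variable {C : Type*} [Category C] [Abelian C] (S : ShortComplex C)

/-- The complex `⋯ → 0 → S.X₁ → S.X₂` with `S.X₂` in degree `0`. -/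
noncomputable def twoTermComplex : ChainComplex C ℕ :=
  ChainComplex.of
    (fun | 0 => S.X₂ | 1 => S.X₁ | _ + 2 => 0)
    (fun | 0 => S.f | _ + 1 => 0)
    (fun | 0 => zero_comp | _ + 1 => zero_comp)

@[simp]
lemma twoTermComplex_d_one_zero : S.twoTermComplex.d 1 0 = S.f := by
  simp [twoTermComplex, ChainComplex.of.d]

lemma isZero_twoTermComplex_X (n : ℕ) : IsZero (S.twoTermComplex.X (n + 2)) :=
  isZero_zero C

variable {S}

noncomputable def ShortExact.projectiveResolution (hS : S.ShortExact)
    [Projective S.X₁] [Projective S.X₂] : ProjectiveResolution S.X₃ where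
  complex := S.twoTermComplex
  projective
    | 0 => inferInstanceAs (Projective S.X₂)
    | 1 => inferInstanceAs (Projective S.X₁)
    | n + 2 => (S.isZero_twoTermComplex_X n).projective
  π := (ChainComplex.toSingle₀Equiv _ _).symm
    ⟨S.g, by rw [twoTermComplex_d_one_zero]; exact S.zero⟩
  quasiIso := ⟨fun n => by
    match n with
    | 0 =>
      rw [ChainComplex.quasiIsoAt₀_iff, ShortComplex.quasiIso_iff_of_zeros' _ rfl rfl rfl]
      refine (ShortComplex.exact_and_epi_g_iff_of_iso ?_).2 ⟨hS.exact, hS.epi_g⟩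
      refine ShortComplex.isoMk (Iso.refl _) (Iso.refl _) (Iso.refl _) ?_ ?_
      · refine (Category.id_comp _).trans ((Category.comp_id _).trans ?_).symm
        exact S.twoTermComplex_d_one_zero
      · refine (Category.id_comp _).trans ((Category.comp_id _).trans ?_).symm
        exact ChainComplex.toSingle₀Equiv_symm_apply_f_zero _ _
    | 1 =>
      rw [quasiIsoAt_iff_exactAt' _ _ (ChainComplex.exactAt_succ_single_obj _ _),
        HomologicalComplex.exactAt_iff' _ 2 1 0 (by simp) (by simp),
        ShortComplex.exact_iff_mono _ ((S.isZero_twoTermComplex_X 0).eq_of_src _ _)]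
      show Mono (S.twoTermComplex.d 1 0)
      rw [twoTermComplex_d_one_zero]
      exact hS.mono_f
    | n + 2 =>
      rw [quasiIsoAt_iff_exactAt' _ _ (ChainComplex.exactAt_succ_single_obj _ _),
        HomologicalComplex.exactAt_iff]
      exact ShortComplex.exact_of_isZero_X₂ _ (S.isZero_twoTermComplex_X n)⟩

/-- Computed on the resolution `0 → S.X₁ → S.X₂`, the vanishing of `Ext¹(S.X₃, Y)` says that
every cochain `S.X₁ ⟶ Y` is a coboundary. -/
lemma ShortExact.hasExtensionsAlong_f_of_subsingleton_ext (hS : S.ShortExact)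
    [Projective S.X₁] [Projective S.X₂] (R : Type*) [Ring R] [Linear R C] [EnoughProjectives C]
    (Y : C) (hY : Subsingleton (((Ext R C 1).obj (Opposite.op S.X₃)).obj Y)) :
    HasExtensionsAlong S.f Y := by
  intro u
  let K := hS.projectiveResolution.complex.linearYonedaObj R Y
  have hK : K.ExactAt 1 := by
    rw [HomologicalComplex.exactAt_iff_isZero_homology]
    exact (ModuleCat.isZero_of_subsingleton _).of_iso (hS.projectiveResolution.isoExt 1 Y).symm
  rw [HomologicalComplex.exactAt_iff' _ 0 1 2 (by simp) (by simp),
    ShortComplex.moduleCat_exact_iff] at hK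
  obtain ⟨v, hv⟩ := hK u ((S.isZero_twoTermComplex_X 0).eq_of_src _ _)
  refine ⟨v, ?_⟩
  rw [← hv]
  exact congrArg (· ≫ v) S.twoTermComplex_d_one_zero.symm

/-- Lift `S.g ≫ φ` to `h₀ : S.X₂ ⟶ S'.X₂`; on `S.X₁` it factors through `S'.X₁`, so subtracting
an extension of that factor makes `h₀` vanish on `S.X₁` and hence descend to `S.X₃`. -/
lemma ShortExact.exists_lift_of_hasExtensionsAlong (hS : S.ShortExact) [Projective S.X₂]
    {S' : ShortComplex C} (hS' : S'.ShortExact) (hext : HasExtensionsAlong S.f S'.X₁)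
    (φ : S.X₃ ⟶ S'.X₃) : ∃ ψ : S.X₃ ⟶ S'.X₂, ψ ≫ S'.g = φ := by
  have := hS.epi_g
  have := hS'.mono_f
  have := hS'.epi_g
  let h₀ : S.X₂ ⟶ S'.X₂ := Projective.factorThru (S.g ≫ φ) S'.g
  have hh₀ : h₀ ≫ S'.g = S.g ≫ φ := Projective.factorThru_comp _ _
  obtain ⟨v, hv⟩ := hext (hS'.exact.lift (S.f ≫ h₀)
    (by rw [Category.assoc, hh₀, S.zero_assoc, zero_comp]))
  have hcorr : S.f ≫ (h₀ - v ≫ S'.f) = 0 := by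
    rw [Preadditive.comp_sub, ← Category.assoc, hv, ShortComplex.Exact.lift_f, sub_self]
  refine ⟨hS.exact.desc _ hcorr, ?_⟩
  rw [← cancel_epi S.g, ← Category.assoc, ShortComplex.Exact.g_desc, Preadditive.sub_comp,
    Category.assoc, S'.zero, comp_zero, sub_zero, hh₀]

end CategoryTheory.ShortComplex

section Modules

variable {A : Type} [Ring A]

lemma ModuleCat.hasExtensionsAlong_pi {P Q : ModuleCat.{0} A} {i : P ⟶ Q} {ι : Type}
    {X : ι → Type} [∀ j, AddCommGroup (X j)] [∀ j, Module A (X j)]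
    (h : ∀ j, HasExtensionsAlong i (ModuleCat.of A (X j))) :
    HasExtensionsAlong i (ModuleCat.of A (∀ j, X j)) := by
  intro u
  choose v hv using fun j => h j (u ≫ ModuleCat.ofHom (LinearMap.proj j))
  refine ⟨ModuleCat.ofHom (LinearMap.pi fun j => (v j).hom), ?_⟩
  ext x j
  exact LinearMap.congr_fun (congrArg ModuleCat.Hom.hom (hv j)) x

variable {T M N : Type} [AddCommGroup T] [Module A T] [AddCommGroup M] [Module A M]
  [AddCommGroup N] [Module A N]

lemma facP_self : facP A T T :=
  ⟨1, LinearMap.proj 0, fun t => ⟨fun _ => t, rfl⟩⟩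

lemma facP_pi (n : ℕ) : facP A T (Fin n → T) :=
  ⟨n, LinearMap.id, Function.surjective_id⟩

lemma facP.of_surjective (h : facP A T M) (q : M →ₗ[A] N) (hq : Function.Surjective q) :
    facP A T N :=
  let ⟨n, f, hf⟩ := h
  ⟨n, q ∘ₗ f, hq.comp hf⟩

lemma facP.prod (hM : facP A T M) (hN : facP A T N) : facP A T (M × N) := by
  obtain ⟨n, f, hf⟩ := hM
  obtain ⟨m, g, hg⟩ := hN
  let e : (Fin (n + m) → T) ≃ₗ[A] (Fin n → T) × (Fin m → T) :=
    (LinearEquiv.funCongrLeft A T finSumFinEquiv).trans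
      (LinearEquiv.sumArrowLequivProdArrow _ _ A T)
  exact ⟨n + m, f.prodMap g ∘ₗ e.toLinearMap, (Prod.map_surjective.2 ⟨hf, hg⟩).comp e.surjective⟩

lemma facP.hasExtensionsAlong {P Q : ModuleCat.{0} A} [Projective P] {i : P ⟶ Q}
    (hT : HasExtensionsAlong i (ModuleCat.of A T)) (hM : facP A T M) :
    HasExtensionsAlong i (ModuleCat.of A M) := by
  obtain ⟨n, f, hf⟩ := hM
  have : Epi (ModuleCat.ofHom f) := (ModuleCat.epi_iff_surjective _).2 hf
  exact (ModuleCat.hasExtensionsAlong_pi fun _ => hT).of_epi (ModuleCat.ofHom f)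

lemma LinearMap.surjective_coprod_of_exact {X Y Z : Type} [AddCommGroup X] [Module A X]
    [AddCommGroup Y] [Module A Y] [AddCommGroup Z] [Module A Z] {f : X →ₗ[A] Y} {g : Y →ₗ[A] Z}
    (hfg : Function.Exact f g) {ψ : M →ₗ[A] Y} (hψ : Function.Surjective (g ∘ₗ ψ)) :
    Function.Surjective (f.coprod ψ) := by
  intro y
  obtain ⟨t, ht⟩ := hψ (g y)
  obtain ⟨x, hx⟩ := (hfg (y - ψ t)).1 (by rw [map_sub, ← ht, LinearMap.comp_apply, sub_self])
  exact ⟨(x, t), by simp [hx]⟩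

lemma LinearMap.exists_comp_eq_of_forall_single {Y Z : Type} [AddCommGroup Y] [Module A Y]
    [AddCommGroup Z] [Module A Z] {g : Y →ₗ[A] Z}
    (h : ∀ φ : M →ₗ[A] Z, ∃ ψ : M →ₗ[A] Y, g ∘ₗ ψ = φ) {ι : Type} [Fintype ι] [DecidableEq ι]
    (φ : (ι → M) →ₗ[A] Z) : ∃ ψ : (ι → M) →ₗ[A] Y, g ∘ₗ ψ = φ := by
  choose ψ hψ using fun j => h (φ ∘ₗ LinearMap.single A (fun _ => M) j)
  refine ⟨∑ j, ψ j ∘ₗ LinearMap.proj j, LinearMap.pi_ext' fun j => ?_⟩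
  rw [← hψ j]
  ext x
  simp [Pi.single_apply, apply_ite]

end Modules

def IsPartialTilting (A : Type) [Ring A] (T : Type) [AddCommGroup T] [Module A T] : Prop :=
  pdLeOne A T ∧ Subsingleton (egrp A 1 T T)

namespace IsPartialTilting

variable {A : Type} [Ring A] {T : Type} [AddCommGroup T] [Module A T] (hT : IsPartialTilting A T)
  {X Y Z : Type} [AddCommGroup X] [Module A X] [AddCommGroup Y] [Module A Y]
  [AddCommGroup Z] [Module A Z] {f : X →ₗ[A] Y} {g : Y →ₗ[A] Z}
  (hf : Function.Injective f) (hg : Function.Surjective g) (hfg : Function.Exact f g)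
include hT hf hg hfg

theorem exists_lift (hX : facP A T X) (φ : T →ₗ[A] Z) : ∃ ψ : T →ₗ[A] Y, g ∘ₗ ψ = φ := by
  obtain ⟨⟨P₀, P₁, _, _, i, p, hi, hp, hip⟩, hrigid⟩ := hT
  have hS := ModuleCat.shortComplex_shortExact
    (ModuleCat.shortComplexOfCompEqZero i p hip.linearMap_comp_eq_zero) hip hi hp
  have hS' := ModuleCat.shortComplex_shortExact
    (ModuleCat.shortComplexOfCompEqZero f g hfg.linearMap_comp_eq_zero) hfg hf hg
  have hext := hX.hasExtensionsAlong (hS.hasExtensionsAlong_f_of_subsingleton_ext ℤ _ hrigid)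
  obtain ⟨ψ, hψ⟩ := hS.exists_lift_of_hasExtensionsAlong hS' hext (ModuleCat.ofHom φ)
  exact ⟨ψ.hom, congrArg ModuleCat.Hom.hom hψ⟩

theorem facP_of_exact (hX : facP A T X) (hZ : facP A T Z) : facP A T Y := by
  obtain ⟨m, q, hq⟩ := hZ
  obtain ⟨ψ, hψ⟩ := LinearMap.exists_comp_eq_of_forall_single (hT.exists_lift hf hg hfg hX) q
  exact (hX.prod (facP_pi m)).of_surjective _
    (LinearMap.surjective_coprod_of_exact hfg (hψ ▸ hq))

end IsPartialTilting

theorem fac_extension_closed_and_proj_of_partial_tilting_general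
    (A : Type) [Ring A]
    (T : Type) [AddCommGroup T] [Module A T]
    (hpd : pdLeOne A T) (hrigid : Subsingleton (egrp A 1 T T)) :
    (∀ (X Y Z : Type) [AddCommGroup X] [Module A X] [AddCommGroup Y] [Module A Y]
      [AddCommGroup Z] [Module A Z] (i : X →ₗ[A] Y) (p : Y →ₗ[A] Z),
        Function.Injective i → Function.Surjective p → Function.Exact i p →
        facP A T X → facP A T Z → facP A T Y) ∧
      projInFac A T T := by
  have hT : IsPartialTilting A T := ⟨hpd, hrigid⟩
  exact ⟨fun _ _ _ _ _ _ _ _ _ _ _ hi hp hip hX hZ => hT.facP_of_exact hi hp hip hX hZ,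
    facP_self, fun _ _ _ _ _ _ _ _ _ _ _ hi hp hip hX _ _ g => hT.exists_lift hi hp hip hX g⟩

/-- Let `T` be a partial `1`-tilting module over an artin algebra `A`
(i.e. `pd_A(T) ≤ 1` and `Ext¹_A(T, T) = 0`).  Then `fac(T)` is closed under extensions
in `A`-mod, and `T` is a projective object of the exact category `fac(T)`. -/
theorem fac_extension_closed_and_proj_of_partial_tilting
    (R A : Type) [CommRing R] [IsArtinianRing R] [Ring A] [Algebra R A] [Module.Finite R A]
    (T : Type) [AddCommGroup T] [Module A T] [Module.Finite A T]
    (hpd : pdLeOne A T) (hrigid : Subsingleton (egrp A 1 T T)) :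
    (∀ (X Y Z : Type) [AddCommGroup X] [Module A X] [AddCommGroup Y] [Module A Y]
      [AddCommGroup Z] [Module A Z] (i : X →ₗ[A] Y) (p : Y →ₗ[A] Z),
        Function.Injective i → Function.Surjective p → Function.Exact i p →
        facP A T X → facP A T Z → facP A T Y) ∧
      projInFac A T T :=
  fac_extension_closed_and_proj_of_partial_tilting_general A T hpd hrigid
end Fac
end
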